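/- For a positive functional $0 \le f \in A^\sim$, the map $T_f : (A^\sim)^\sim_n \to A^\sim$, $T_f(F) = F \cdot f$, is interval preserving: if $0 \le g \le T_f(F)$ in $A^\sim$ with $F \ge 0$, then there exists $0 \le G \le F$ in $(A^\sim)^\sim_n$ with $T_f(G) = g$. -/

import Mathlib

noncomputable section

/-- Riesz space (real vector lattice) axioms, as a `Prop`-valued class. -/
class RieszSp (E : Type*) [AddCommGroup E] [Lattice E] [Module ℝ E] : Prop where
  add_le_add_left : ∀ a b : E, a ≤ b → ∀ c : E, c + a ≤ c + b
  smul_nonneg : ∀ (r : ℝ) (a : E), 0 ≤ r → 0 ≤ a → 0 ≤ r • a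

/-- Archimedean (real) f-algebra axioms, as a `Prop`-valued class. -/
class FAlg (A : Type*) [CommRing A] [Lattice A] [Module ℝ A] extends RieszSp A : Prop where
  mul_nonneg : ∀ a b : A, 0 ≤ a → 0 ≤ b → 0 ≤ a * b
  disjoint_mul : ∀ a b c : A, a ⊓ b = 0 → 0 ≤ c → (c * a) ⊓ b = 0
  archimedean : ∀ a b : A, (∀ n : ℕ, (n : ℝ) • a ≤ b) → a ≤ 0

/-- A linear functional is order bounded if it is bounded on order intervals. -/
def OrderBddFn {E : Type*} [AddCommGroup E] [Lattice E] [Module ℝ E]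
    (φ : E →ₗ[ℝ] ℝ) : Prop :=
  ∀ a b : E, ∃ M : ℝ, ∀ x : E, a ≤ x → x ≤ b → |φ x| ≤ M

/-- A linear functional is order continuous if it sends downward directed sets with
infimum `0` to nets converging to `0`. -/
def OrdContFn {E : Type*} [AddCommGroup E] [Lattice E] [Module ℝ E]
    (φ : E →ₗ[ℝ] ℝ) : Prop :=
  ∀ s : Set E, s.Nonempty → DirectedOn (· ≥ ·) s → IsGLB s 0 →
    ∀ ε : ℝ, 0 < ε → ∃ d ∈ s, ∀ d' ∈ s, d' ≤ d → |φ d'| < ε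

/-- The data realizing `D` as the order dual `A^∼` of the f-algebra `A` (with separating
order dual) and `N` as the order continuous part `(A^∼)^∼_n` of the order bidual of `A`,
together with the Arens multiplication and its actions. -/
class DualSetting (A : Type*) [CommRing A] [Lattice A] [Module ℝ A]
    (D : Type*) [AddCommGroup D] [Lattice D] [Module ℝ D]
    (N : Type*) [CommRing N] [Lattice N] [Module ℝ N] where
  dual : D →ₗ[ℝ] A →ₗ[ℝ] ℝ
  bidual : N →ₗ[ℝ] D →ₗ[ℝ] ℝ
  dual_inj : Function.Injective dual
  bidual_inj : Function.Injective bidual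
  dual_bdd : ∀ d : D, OrderBddFn (dual d)
  dual_surj : ∀ φ : A →ₗ[ℝ] ℝ, OrderBddFn φ → ∃ d : D, dual d = φ
  dual_order : ∀ d : D, 0 ≤ d ↔ ∀ a : A, 0 ≤ a → 0 ≤ dual d a
  bidual_bdd : ∀ F : N, OrderBddFn (bidual F)
  bidual_cont : ∀ F : N, OrdContFn (bidual F)
  bidual_surj : ∀ Φ : D →ₗ[ℝ] ℝ, OrderBddFn Φ → OrdContFn Φ → ∃ F : N, bidual F = Φ
  bidual_order : ∀ F : N, 0 ≤ F ↔ ∀ d : D, 0 ≤ d → 0 ≤ bidual F d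
  separating : ∀ a : A, (∀ d : D, dual d a = 0) → a = 0
  /-- the action `f ⋅ a` of `A` on `A^∼`:  `(f ⋅ a)(b) = f (a b)` -/
  dsmul : A → D → D
  dsmul_eval : ∀ (a : A) (f : D) (b : A), dual (dsmul a f) b = dual f (a * b)
  /-- the action `F ⋅ f` of `(A^∼)^∼_n` on `A^∼`:  `(F ⋅ f)(a) = F (f ⋅ a)` -/
  nsmul : N → D → D
  nsmul_eval : ∀ (F : N) (f : D) (a : A), dual (nsmul F f) a = bidual F (dsmul a f)
  /-- the Arens product on `(A^∼)^∼_n`:  `(F * G)(f) = F (G ⋅ f)` -/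
  mul_eval : ∀ (F G : N) (f : D), bidual (F * G) f = bidual F (nsmul G f)

variable {A : Type*} [CommRing A] [Lattice A] [Module ℝ A] [FAlg A]
variable {D : Type*} [AddCommGroup D] [Lattice D] [Module ℝ D] [RieszSp D]
variable {N : Type*} [CommRing N] [Lattice N] [Module ℝ N] [FAlg N]
variable [P : DualSetting A D N]

/-!
Along `j : a ↦ f ⋅ a` the functional `g` is dominated by the sublinear functional `h ↦ F h⁺`
on `A^∼`: for `f ≥ 0` the functionals `f ⋅ a⁺` and `f ⋅ a⁻` are disjoint, so `(f ⋅ a)⁺ = f ⋅ a⁺`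
and `g a ≤ g a⁺ ≤ (F ⋅ f) a⁺ = F (f ⋅ a)⁺`. Hahn–Banach extends `j a ↦ g a` to a functional
`G ≤ F (·⁺)` on all of `A^∼`, that is `0 ≤ G ≤ F`; being squeezed below the order continuous `F`,
`G` lies in `(A^∼)^∼_n`, and `G ⋅ f = g` holds by construction.
-/

section RieszSpace

variable {E : Type*} [AddCommGroup E] [Lattice E] [Module ℝ E] [RieszSp E]

instance RieszSp.toIsOrderedAddMonoid : IsOrderedAddMonoid E where
  add_le_add_left a b h c := by
    simpa only [add_comm c] using RieszSp.add_le_add_left a b h c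

instance RieszSp.toIsOrderedModule : IsOrderedModule ℝ E :=
  .of_smul_nonneg fun r hr x hx => RieszSp.smul_nonneg r x hr hx

theorem RieszSp.posPart_smul {c : ℝ} (hc : 0 < c) (x : E) : (c • x)⁺ = c • x⁺ := by
  simpa only [posPart_def, OrderIso.smulRight_apply, smul_zero] using
    ((OrderIso.smulRight (β := E) hc).map_sup x 0).symm

theorem RieszSp.posPart_add_le (x y : E) : (x + y)⁺ ≤ x⁺ + y⁺ :=
  sup_le (add_le_add (le_posPart x) (le_posPart y))
    (add_nonneg (posPart_nonneg x) (posPart_nonneg y))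

theorem RieszSp.posPart_sub_eq_self {p q : E} (h : p ⊓ q = 0) : (p - q)⁺ = p := by
  rw [eq_comm, ← sub_eq_zero, ← inf_eq_sub_posPart_sub, h]

end RieszSpace

section FAlgebra

variable {B : Type*} [CommRing B] [Lattice B] [Module ℝ B] [FAlg B]

instance FAlg.toPosMulMono : PosMulMono B where
  mul_le_mul_of_nonneg_left a ha b c hbc := by
    simpa only [mul_sub, sub_nonneg] using FAlg.mul_nonneg a (c - b) ha (sub_nonneg.2 hbc)

theorem FAlg.mul_eq_zero_of_inf_eq_zero {a b : B} (ha : 0 ≤ a) (hb : 0 ≤ b) (h : a ⊓ b = 0) :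
    a * b = 0 := by
  have hba : (b * a) ⊓ b = 0 := FAlg.disjoint_mul a b b h hb
  simpa [mul_comm b a] using FAlg.disjoint_mul b (b * a) a (by rwa [inf_comm]) ha

theorem FAlg.posPart_mul_negPart (a : B) : a⁺ * a⁻ = 0 :=
  FAlg.mul_eq_zero_of_inf_eq_zero (posPart_nonneg a) (negPart_nonneg a)
    (posPart_inf_negPart_eq_zero a)

theorem FAlg.mul_posPart_sub_le {b u : B} (hb : 0 ≤ b) (hu : 0 ≤ u) : u * (b - u)⁺ ≤ b * b := by
  set w := (b - u)⁺
  have hw : 0 ≤ w := posPart_nonneg _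
  have hwb : w ≤ b := sup_le (sub_le_self b hu) hb
  have hsq : (b - u) * w = w * w := by
    conv_lhs => rw [← posPart_sub_negPart (b - u)]
    rw [sub_mul, mul_comm (b - u)⁻, FAlg.posPart_mul_negPart, sub_zero]
  calc u * w = b * w - w * w := by rw [← hsq]; ring
    _ ≤ b * w := sub_le_self _ (FAlg.mul_nonneg w w hw hw)
    _ ≤ b * b := mul_le_mul_of_nonneg_left hwb hb

theorem FAlg.le_zero_of_forall_le_inv_smul {x u : B} (hu : 0 ≤ u)
    (h : ∀ n : ℕ, x ≤ ((n : ℝ) + 1)⁻¹ • u) : x ≤ 0 := by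
  refine FAlg.archimedean x u fun n => ?_
  calc (n : ℝ) • x ≤ (n : ℝ) • (((n : ℝ) + 1)⁻¹ • u) :=
        smul_le_smul_of_nonneg_left (h n) n.cast_nonneg
    _ = ((n : ℝ) / (n + 1)) • u := by rw [smul_smul, div_eq_mul_inv]
    _ ≤ u := smul_le_of_le_one_left hu (div_le_one_of_le₀ (by linarith) (by positivity))

theorem FAlg.map_real_eq_smul_of_monotone (φ : ℝ →+ B) (hφ : Monotone φ) (r : ℝ) :
    φ r = r • φ 1 := by
  have hrat (q : ℚ) : φ q = (q : ℝ) • φ 1 := by simpa using map_ratCast_smul φ ℝ ℝ q 1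
  have h1 : 0 ≤ φ 1 := by simpa using hφ zero_le_one
  -- squeeze `r` between consecutive multiples of `1 / (n + 1)`
  have hsqueeze (n : ℕ) : φ r - r • φ 1 ≤ ((n : ℝ) + 1)⁻¹ • φ 1 ∧
      r • φ 1 - φ r ≤ ((n : ℝ) + 1)⁻¹ • φ 1 := by
    have hn : (0 : ℝ) < n + 1 := by positivity
    set m : ℤ := ⌊((n : ℝ) + 1) * r⌋
    set q : ℚ := m / (n + 1)
    set q' : ℚ := (m + 1) / (n + 1)
    have hq : (q : ℝ) ≤ r := by
      simp only [q]; push_cast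
      rw [div_le_iff₀ hn, mul_comm]; exact Int.floor_le _
    have hq' : r ≤ q' := by
      simp only [q']; push_cast
      rw [le_div_iff₀ hn, mul_comm]; exact (Int.lt_floor_add_one _).le
    have hgap : (q' : ℝ) • φ 1 - (q : ℝ) • φ 1 = ((n : ℝ) + 1)⁻¹ • φ 1 := by
      rw [← sub_smul]; congr 1; simp only [q, q']; push_cast; field_simp; ring
    rw [← hgap]
    constructor
    · exact sub_le_sub (hrat q' ▸ hφ hq') (smul_le_smul_of_nonneg_right hq h1)
    · exact sub_le_sub (smul_le_smul_of_nonneg_right hq' h1) (hrat q ▸ hφ hq)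
  refine sub_eq_zero.1 (le_antisymm ?_ ?_)
  · exact FAlg.le_zero_of_forall_le_inv_smul h1 fun n => (hsqueeze n).1
  · rw [sub_nonneg, ← sub_nonpos]
    exact FAlg.le_zero_of_forall_le_inv_smul h1 fun n => (hsqueeze n).2

theorem FAlg.smul_mul_of_nonneg (r : ℝ) {a c : B} (ha : 0 ≤ a) (hc : 0 ≤ c) :
    (r • a) * c = r • (a * c) := by
  let φ : ℝ →+ B := AddMonoidHom.mk' (fun s => (s • a) * c) fun s t => by
    simp only [add_smul, add_mul]
  have hφ : Monotone φ := fun s t hst => by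
    have h := FAlg.mul_nonneg _ c (smul_nonneg (sub_nonneg.2 hst) ha) hc
    rwa [sub_smul, sub_mul, sub_nonneg] at h
  simpa only [φ, AddMonoidHom.mk'_apply, one_smul] using
    FAlg.map_real_eq_smul_of_monotone φ hφ r

-- The f-algebra axioms do not tie the product to real scalars; the Archimedean property does.
instance FAlg.toIsScalarTower : IsScalarTower ℝ B B where
  smul_assoc r a c := by
    simp only [smul_eq_mul]
    have hpos {a : B} (ha : 0 ≤ a) (c : B) : (r • a) * c = r • (a * c) := by
      rw [← posPart_sub_negPart c, mul_sub, mul_sub, smul_sub,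
        FAlg.smul_mul_of_nonneg r ha (posPart_nonneg c),
        FAlg.smul_mul_of_nonneg r ha (negPart_nonneg c)]
    rw [← posPart_sub_negPart a, smul_sub, sub_mul, sub_mul, smul_sub,
      hpos (posPart_nonneg a), hpos (negPart_nonneg a)]

end FAlgebra

section PositiveFunctional

variable {E : Type*} [AddCommGroup E] [Lattice E] [Module ℝ E]

theorem orderBddFn_of_monotone {φ : E →ₗ[ℝ] ℝ} (hφ : Monotone φ) : OrderBddFn φ :=
  fun a b => ⟨|φ a| + |φ b|, fun x hax hxb => abs_le.2
    ⟨by linarith [hφ hax, neg_abs_le (φ a), abs_nonneg (φ b)],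
     by linarith [hφ hxb, le_abs_self (φ b), abs_nonneg (φ a)]⟩⟩

theorem OrdContFn.of_nonneg_of_le {φ ψ : E →ₗ[ℝ] ℝ} (hψ : OrdContFn ψ)
    (hφ0 : ∀ x, 0 ≤ x → 0 ≤ φ x) (hφψ : ∀ x, 0 ≤ x → φ x ≤ ψ x) : OrdContFn φ := by
  intro s hs hdir hglb ε hε
  obtain ⟨d, hd, hψd⟩ := hψ s hs hdir hglb ε hε
  refine ⟨d, hd, fun d' hd' hd'd => ?_⟩
  have h0 : 0 ≤ d' := hglb.1 hd'
  rw [abs_of_nonneg (hφ0 d' h0)]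
  exact (hφψ d' h0).trans_lt ((le_abs_self _).trans_lt (hψd d' hd' hd'd))

end PositiveFunctional

theorem exists_extension_comp_of_le_sublinear {V E : Type*} [AddCommGroup V] [Module ℝ V]
    [AddCommGroup E] [Module ℝ E] (j : V →ₗ[ℝ] E) (φ : V →ₗ[ℝ] ℝ) (p : E → ℝ)
    (p_smul : ∀ c : ℝ, 0 < c → ∀ x, p (c • x) = c * p x) (p_add : ∀ x y, p (x + y) ≤ p x + p y)
    (hφ : ∀ v, φ v ≤ p (j v)) : ∃ Φ : E →ₗ[ℝ] ℝ, Φ ∘ₗ j = φ ∧ ∀ x, Φ x ≤ p x := by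
  have p_zero : p 0 = 0 := by
    have h := p_smul 2 two_pos 0
    rw [smul_zero] at h
    linarith
  have hker : LinearMap.ker j ≤ LinearMap.ker φ := fun v hv => by
    rw [LinearMap.mem_ker] at hv ⊢
    have h₁ := hφ v
    have h₂ := hφ (-v)
    rw [hv, p_zero] at h₁
    rw [map_neg, map_neg, hv, neg_zero, p_zero] at h₂
    linarith
  let φ₀ : LinearMap.range j →ₗ[ℝ] ℝ :=
    (LinearMap.ker j).liftQ φ hker ∘ₗ j.quotKerEquivRange.symm.toLinearMap
  have hφ₀ (v : V) : φ₀ ⟨j v, LinearMap.mem_range_self j v⟩ = φ v := by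
    simp [φ₀, LinearMap.quotKerEquivRange_symm_apply_image]
  obtain ⟨Φ, hΦφ₀, hΦp⟩ :=
    exists_extension_of_le_sublinear ⟨LinearMap.range j, φ₀⟩ p p_smul p_add <| by
      rintro ⟨_, v, rfl⟩
      exact (hφ₀ v).trans_le (hφ v)
  exact ⟨Φ, LinearMap.ext fun v => (hΦφ₀ ⟨j v, _⟩).trans (hφ₀ v), hΦp⟩

theorem exists_nonneg_extension_comp_of_le_posPart {V E : Type*} [AddCommGroup V]
    [Module ℝ V] [AddCommGroup E] [Lattice E] [Module ℝ E] [RieszSp E] (j : V →ₗ[ℝ] E)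
    (φ : V →ₗ[ℝ] ℝ) (ψ : E →ₗ[ℝ] ℝ) (hψ : Monotone ψ) (hφ : ∀ v, φ v ≤ ψ (j v)⁺) :
    ∃ Φ : E →ₗ[ℝ] ℝ, Φ ∘ₗ j = φ ∧ (∀ x, 0 ≤ x → 0 ≤ Φ x) ∧ ∀ x, 0 ≤ x → Φ x ≤ ψ x := by
  obtain ⟨Φ, hΦj, hΦp⟩ := exists_extension_comp_of_le_sublinear j φ (fun x => ψ x⁺)
    (fun c hc x => by rw [RieszSp.posPart_smul hc, map_smul, smul_eq_mul])
    (fun x y => (hψ (RieszSp.posPart_add_le x y)).trans_eq (map_add ψ _ _)) hφ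
  refine ⟨Φ, hΦj, fun x hx => ?_, fun x hx => ?_⟩
  · have h := hΦp (-x)
    rw [map_neg, posPart_eq_zero.2 (neg_nonpos.2 hx), map_zero] at h
    linarith
  · simpa [posPart_eq_self.2 hx] using hΦp x

namespace DualSetting

variable {A D N : Type*} [CommRing A] [Lattice A] [Module ℝ A]
  [AddCommGroup D] [Lattice D] [Module ℝ D] [CommRing N] [Lattice N] [Module ℝ N]
  (P : DualSetting A D N)

theorem dual_le_dual [RieszSp D] {d e : D} (hde : d ≤ e) {a : A} (ha : 0 ≤ a) :
    P.dual d a ≤ P.dual e a := by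
  simpa using (P.dual_order (e - d)).1 (sub_nonneg.2 hde) a ha

variable [FAlg A]

def dsmulₗ (f : D) : A →ₗ[ℝ] D where
  toFun a := P.dsmul a f
  map_add' a b := P.dual_inj <| LinearMap.ext fun c => by
    simp only [map_add, LinearMap.add_apply, P.dsmul_eval, add_mul]
  map_smul' r a := P.dual_inj <| LinearMap.ext fun c => by
    simp only [map_smul, LinearMap.smul_apply, P.dsmul_eval, smul_mul_assoc, RingHom.id_apply]

@[simp]
theorem dsmulₗ_apply (f : D) (a : A) : P.dsmulₗ f a = P.dsmul a f := rfl

theorem dual_mono {d : D} (hd : 0 ≤ d) : Monotone (P.dual d) :=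
  (monotone_iff_map_nonneg _).2 ((P.dual_order d).1 hd)

theorem dsmul_nonneg {f : D} (hf : 0 ≤ f) {a : A} (ha : 0 ≤ a) : 0 ≤ P.dsmul a f :=
  (P.dual_order _).2 fun b hb => by
    rw [P.dsmul_eval]; exact (P.dual_order f).1 hf _ (FAlg.mul_nonneg a b ha hb)

theorem eq_zero_of_forall_nonneg_dual_eq_zero {d : D} (h : ∀ a, 0 ≤ a → P.dual d a = 0) :
    d = 0 :=
  P.dual_inj <| LinearMap.ext fun a => by
    rw [← posPart_sub_negPart a, map_sub, h _ (posPart_nonneg a), h _ (negPart_nonneg a),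
      map_zero, LinearMap.zero_apply, sub_zero]

theorem dsmul_inf_dsmul_eq_zero [RieszSp D] {f : D} (hf : 0 ≤ f) {x y : A} (hx : 0 ≤ x)
    (hy : 0 ≤ y) (hxy : x ⊓ y = 0) : P.dsmul x f ⊓ P.dsmul y f = 0 := by
  set w := P.dsmul x f ⊓ P.dsmul y f
  have hw : 0 ≤ w := le_inf (P.dsmul_nonneg hf hx) (P.dsmul_nonneg hf hy)
  -- split `b = b ⊓ n • y + (b - n • y)⁺`: `f ⋅ x` kills the first part,
  -- and `f ⋅ y` is at most `f (b * b) / n` on the second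
  have hbound (b : A) (hb : 0 ≤ b) (n : ℕ) : n * P.dual w b ≤ P.dual f (b * b) := by
    have hny : 0 ≤ n • y := nsmul_nonneg hy n
    have hc : 0 ≤ b ⊓ n • y := le_inf hb hny
    have hxc : x * (b ⊓ n • y) = 0 := by
      refine le_antisymm ?_ (FAlg.mul_nonneg _ _ hx hc)
      calc x * (b ⊓ n • y) ≤ x * (n • y) := mul_le_mul_of_nonneg_left inf_le_right hx
        _ = 0 := by rw [mul_smul_comm, FAlg.mul_eq_zero_of_inf_eq_zero hx hy hxy, smul_zero]
    have hsplit : b = b ⊓ n • y + (b - n • y)⁺ := by rw [inf_eq_sub_posPart_sub]; abel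
    calc n * P.dual w b = n * (P.dual w (b ⊓ n • y) + P.dual w (b - n • y)⁺) := by
          rw [← LinearMap.map_add, ← hsplit]
      _ ≤ n * (P.dual (P.dsmul x f) (b ⊓ n • y) + P.dual (P.dsmul y f) (b - n • y)⁺) := by
          gcongr
          · exact P.dual_le_dual inf_le_left hc
          · exact P.dual_le_dual inf_le_right (posPart_nonneg _)
      _ = P.dual f ((n • y) * (b - n • y)⁺) := by
          rw [P.dsmul_eval, P.dsmul_eval, hxc, map_zero, zero_add, smul_mul_assoc, map_nsmul]
          exact (nsmul_eq_mul n _).symm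
      _ ≤ P.dual f (b * b) := P.dual_mono hf (FAlg.mul_posPart_sub_le hb hny)
  refine P.eq_zero_of_forall_nonneg_dual_eq_zero fun b hb => ?_
  refine le_antisymm ?_ ((P.dual_order w).1 hw b hb)
  by_contra! hpos
  obtain ⟨n, hn⟩ := exists_nat_gt (P.dual f (b * b) / P.dual w b)
  rw [div_lt_iff₀ hpos] at hn
  linarith [hbound b hb n]

theorem posPart_dsmul [RieszSp D] {f : D} (hf : 0 ≤ f) (a : A) :
    (P.dsmul a f)⁺ = P.dsmul a⁺ f := by
  have hsplit : P.dsmul a f = P.dsmul a⁺ f - P.dsmul a⁻ f := by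
    simpa only [dsmulₗ_apply, posPart_sub_negPart] using (P.dsmulₗ f).map_sub a⁺ a⁻
  rw [hsplit]
  exact RieszSp.posPart_sub_eq_self (P.dsmul_inf_dsmul_eq_zero hf (posPart_nonneg a)
    (negPart_nonneg a) (posPart_inf_negPart_eq_zero a))

end DualSetting

/-- For `0 ≤ f ∈ A^∼`, the map `T_f F = F ⋅ f` is interval preserving. -/
theorem stmt1 (f : D) (hf : 0 ≤ f) (F : N) (hF : 0 ≤ F) (g : D)
    (hg0 : 0 ≤ g) (hgF : g ≤ P.nsmul F f) :
    ∃ G : N, 0 ≤ G ∧ G ≤ F ∧ P.nsmul G f = g := by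
  have hFmono : Monotone (P.bidual F) := (monotone_iff_map_nonneg _).2 ((P.bidual_order F).1 hF)
  have hdom (a : A) : P.dual g a ≤ P.bidual F (P.dsmulₗ f a)⁺ := by
    calc P.dual g a ≤ P.dual g a⁺ := P.dual_mono hg0 (le_posPart a)
      _ ≤ P.dual (P.nsmul F f) a⁺ := P.dual_le_dual hgF (posPart_nonneg a)
      _ = P.bidual F (P.dsmulₗ f a)⁺ := by
        rw [P.nsmul_eval, DualSetting.dsmulₗ_apply, P.posPart_dsmul hf]
  obtain ⟨Φ, hΦj, hΦ0, hΦF⟩ :=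
    exists_nonneg_extension_comp_of_le_posPart (P.dsmulₗ f) (P.dual g) (P.bidual F) hFmono hdom
  obtain ⟨G, hG⟩ := P.bidual_surj Φ (orderBddFn_of_monotone ((monotone_iff_map_nonneg Φ).2 hΦ0))
    ((P.bidual_cont F).of_nonneg_of_le hΦ0 hΦF)
  refine ⟨G, (P.bidual_order G).2 (hG ▸ hΦ0), ?_, ?_⟩
  · refine sub_nonneg.1 ((P.bidual_order _).2 fun d hd => ?_)
    simpa [hG] using hΦF d hd
  · exact P.dual_inj <| LinearMap.ext fun a => by
      rw [P.nsmul_eval, hG, ← DualSetting.dsmulₗ_apply, ← LinearMap.comp_apply, hΦj]
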